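/- Define polynomials $H_\alpha \in \mathbb{Z}[q]$ for $\alpha = \sum_{i=1}^n a_i\alpha_i$ in the positive root lattice of type $A_n$ recursively by: $H_\alpha = 1$ if $n = 0$, and for $n > 0$, $H_\alpha = \sum_\beta \prod_{j=1}^{n-1}\binom{a_j}{b_j}_q \binom{a_{j+1}}{b_j}_q q^{(\beta,\beta)/2} H_\beta$, where $\beta = \sum_{j=1}^{n-1} b_j\alpha_j$ ranges over the positive root lattice of type $A_{n-1}$ and $(\beta,\beta)/2 = \sum_j b_j^2 - \sum_j b_j b_{j+1}$. Then $H_\alpha$ satisfies the Toda recursion: $\big(\sum_{i=0}^n (q^{a_{i+1}-a_i}-1)\big) H_\alpha = \sum_{i=1}^n q^{a_{i+1}-a_i}(1-q^{a_i})^2 H_{\alpha-\alpha_i}$, with the conventions $a_0 = a_{n+1} = 0$ and the term involving $H_{\alpha-\alpha_i}$ interpreted as zero when $a_i = 0$. -/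
import Mathlib


open Finset

/-- The indeterminate `q`, as a rational function. -/
noncomputable def q : RatFunc ℚ := RatFunc.X

/-- The q-Pochhammer product `(q)_a = ∏_{m=1}^{a} (1 - q^m)`. -/
noncomputable def qpoch (a : ℕ) : RatFunc ℚ := ∏ m ∈ Finset.range a, (1 - q ^ (m + 1))

/-- The Gaussian binomial coefficient, zero when `b > a`. -/
noncomputable def gb (a b : ℕ) : RatFunc ℚ :=
  if b ≤ a then qpoch a / (qpoch b * qpoch (a - b)) else 0

/-- One-indexed extension by zero: `ext n a k = a_k` for `1 ≤ k ≤ n`, and `0` otherwise. -/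
def ext (n : ℕ) (a : Fin n → ℕ) (k : ℕ) : ℕ :=
  if h : 1 ≤ k ∧ k ≤ n then a ⟨k - 1, by omega⟩ else 0

/-- In type `A_n`, `(β,β)/2 = ∑ᵢ bᵢ² - ∑ᵢ bᵢ bᵢ₊₁` (the truncated natural
subtraction is exact here). -/
def pairA (n : ℕ) (b : Fin n → ℕ) : ℕ :=
  (∑ k ∈ Finset.range n, ext n b (k + 1) ^ 2) -
    ∑ k ∈ Finset.range n, ext n b (k + 1) * ext n b (k + 2)

/-- `(q)_γ = ∏ᵢ ∏_{j=1}^{cᵢ} (1 - qʲ)` in type `A_n`. -/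
noncomputable def qpochA (n : ℕ) (γ : Fin n → ℕ) : RatFunc ℚ := ∏ i, qpoch (γ i)

/-! ### Basic lemmas on `q`, `qpoch`, `gb` -/

lemma q_ne_zero : q ≠ 0 := RatFunc.X_ne_zero

lemma one_sub_q_pow_ne_zero (m : ℕ) : (1 : RatFunc ℚ) - q ^ (m + 1) ≠ 0 := by
  intro h
  have h2 : (RatFunc.X : RatFunc ℚ) ^ (m + 1) = 1 := by
    show (q : RatFunc ℚ) ^ (m + 1) = 1
    linear_combination -h
  rw [← RatFunc.algebraMap_X (K := ℚ), ← map_pow,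
    ← map_one (algebraMap (Polynomial ℚ) (RatFunc ℚ))] at h2
  have h3 := IsFractionRing.injective (Polynomial ℚ) (RatFunc ℚ) h2
  have := congrArg Polynomial.natDegree h3
  simp [Polynomial.natDegree_X_pow] at this

lemma qpoch_zero : qpoch 0 = 1 := by simp [qpoch]

lemma qpoch_succ (a : ℕ) : qpoch (a + 1) = qpoch a * (1 - q ^ (a + 1)) :=
  Finset.prod_range_succ _ a

lemma qpoch_ne_zero (a : ℕ) : qpoch a ≠ 0 := by
  induction a with
  | zero => simp [qpoch]
  | succ n ih => rw [qpoch_succ]; exact mul_ne_zero ih (one_sub_q_pow_ne_zero n)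

lemma gb_of_le {a b : ℕ} (h : b ≤ a) : gb a b = qpoch a / (qpoch b * qpoch (a - b)) :=
  if_pos h

lemma gb_of_lt {a b : ℕ} (h : a < b) : gb a b = 0 := if_neg (by omega)

lemma gb_ne_zero {a b : ℕ} (h : b ≤ a) : gb a b ≠ 0 := by
  rw [gb_of_le h]
  exact div_ne_zero (qpoch_ne_zero a) (mul_ne_zero (qpoch_ne_zero b) (qpoch_ne_zero _))

/-- Ratio lemma 1. -/
lemma RL1 (m k : ℕ) (h : k ≤ m) :
    (1 - q ^ m) * gb (m - 1) k = (1 - q ^ (m - k)) * gb m k := by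
  rcases Nat.eq_zero_or_pos m with hm | hm
  · subst hm
    interval_cases k
    simp
  · rcases eq_or_lt_of_le h with hk | hk
    · subst hk
      rw [gb_of_lt (by omega), Nat.sub_self, pow_zero, sub_self, zero_mul, mul_zero]
    · obtain ⟨m', rfl⟩ : ∃ m', m = m' + 1 := ⟨m - 1, by omega⟩
      have hk' : k ≤ m' := by omega
      rw [gb_of_le (by omega : k ≤ m' + 1 - 1), gb_of_le (by omega)]
      have e1 : m' + 1 - 1 = m' := by omega
      have e2 : m' + 1 - k = (m' - k) + 1 := by omega
      rw [e1, e2, qpoch_succ m', qpoch_succ (m' - k)]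
      have e3 : m' + 1 - 1 - k = m' - k := by omega
      rw [e3] at *
      set u := 1 - q ^ (m' + 1) with hu
      set v := 1 - q ^ (m' - k + 1) with hv
      have hu0 : u ≠ 0 := one_sub_q_pow_ne_zero m'
      have hv0 : v ≠ 0 := one_sub_q_pow_ne_zero (m' - k)
      clear_value u v
      have hP := qpoch_ne_zero m'
      have hK := qpoch_ne_zero k
      have hM := qpoch_ne_zero (m' - k)
      field_simp

/-- Ratio lemma 2. -/
lemma RL2 (m k : ℕ) (h : k ≤ m) :
    (1 - q ^ (k + 1)) * gb m (k + 1) = (1 - q ^ (m - k)) * gb m k := by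
  rcases eq_or_lt_of_le h with hk | hk
  · subst hk
    rw [gb_of_lt (by omega), Nat.sub_self, pow_zero, sub_self, zero_mul, mul_zero]
  · rw [gb_of_le (by omega : k + 1 ≤ m), gb_of_le h]
    have e2 : m - k = (m - (k + 1)) + 1 := by omega
    rw [e2, qpoch_succ k, qpoch_succ (m - (k + 1))]
    set u := 1 - q ^ (k + 1) with hu
    set v := 1 - q ^ (m - (k + 1) + 1) with hv
    have hu0 : u ≠ 0 := one_sub_q_pow_ne_zero k
    have hv0 : v ≠ 0 := one_sub_q_pow_ne_zero (m - (k + 1))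
    clear_value u v
    have hP := qpoch_ne_zero m
    have hK := qpoch_ne_zero k
    have hM := qpoch_ne_zero (m - (k + 1))
    field_simp

/-! ### The general telescoping identity and scalar Toda identity -/

lemma gen_identity {K : Type*} [CommRing K] (x u y v : ℕ → K) (n : ℕ) :
    (∑ i ∈ range (n + 2), (x (i + 1) * u i - 1))
      + (∑ j ∈ range n, (y (j + 1) * v j - x (j + 1) * v j - x (j + 2) * v j
          + x (j + 1) * x (j + 2) * (v j * v (j + 1))))
      + (1 - x 1 * u 0 + x 1 * v 0)
      + (y (n + 1) * v n + x (n + 2) * x (n + 1) * (v n * v (n + 1)))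
      = (∑ i ∈ range (n + 1), (y (i + 1) * v i - 1))
      + (∑ i ∈ range (n + 1), (x (i + 2) * u (i + 1) - x (i + 2) * v i
          - x (i + 2) * v (i + 1) + x (i + 1) * x (i + 2) * (v i * v (i + 1))))
      + (x (n + 2) * v n + x (n + 1) * v n + x (n + 2) * v (n + 1)) := by
  induction n with
  | zero =>
    simp only [sum_range_succ, sum_range_zero, sum_range_one]
    ring
  | succ n ih =>
    rw [sum_range_succ (fun i => x (i + 1) * u i - 1) (n + 2),
      sum_range_succ (fun j => y (j + 1) * v j - x (j + 1) * v j - x (j + 2) * v j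
          + x (j + 1) * x (j + 2) * (v j * v (j + 1))) n,
      sum_range_succ (fun i => y (i + 1) * v i - 1) (n + 1),
      sum_range_succ (fun i => x (i + 2) * u (i + 1) - x (i + 2) * v i
          - x (i + 2) * v (i + 1) + x (i + 1) * x (i + 2) * (v i * v (i + 1))) (n + 1)]
    simp only [show n + 1 + 1 = n + 2 from rfl, show n + 2 + 1 = n + 3 from rfl,
      show n + 1 + 2 = n + 3 from rfl]
    linear_combination ih

lemma zpow_mul_zpow (s t : ℤ) : (q : RatFunc ℚ) ^ s * q ^ t = q ^ (s + t) :=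
  (zpow_add₀ q_ne_zero s t).symm

lemma npow_eq_zpow_sub {m k : ℕ} (h : k ≤ m) :
    (q : RatFunc ℚ) ^ (m - k) = q ^ ((m : ℤ) - (k : ℤ)) := by
  rw [← zpow_natCast]
  congr 1
  omega

lemma term_i (a1 a2 b0 b1 : ℤ) :
    (q : RatFunc ℚ) ^ (a2 - a1) * (1 - q ^ (a1 - b0)) * (1 - q ^ (a1 - b1))
      = q ^ (a2 - a1) - q ^ (a2 - b0) - q ^ (a2 - b1) + q ^ (a1 + a2 - b0 - b1) := by
  have hp : (q : RatFunc ℚ) ^ (a2 - a1) * q ^ (a1 - b0) = q ^ (a2 - b0) := by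
    rw [zpow_mul_zpow]; congr 1; ring
  have hq : (q : RatFunc ℚ) ^ (a2 - a1) * q ^ (a1 - b1) = q ^ (a2 - b1) := by
    rw [zpow_mul_zpow]; congr 1; ring
  have hr : (q : RatFunc ℚ) ^ (a2 - b0) * q ^ (a1 - b1) = q ^ (a1 + a2 - b0 - b1) := by
    rw [zpow_mul_zpow]; congr 1; ring
  linear_combination (q ^ (a1 - b1) - 1) * hp - hq + hr

lemma term_j (a1 a2 b0 b1 : ℤ) :
    (q : RatFunc ℚ) ^ (b1 - b0) * (1 - q ^ (a1 - b1)) * (1 - q ^ (a2 - b1))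
      = q ^ (b1 - b0) - q ^ (a1 - b0) - q ^ (a2 - b0) + q ^ (a1 + a2 - b0 - b1) := by
  have hp : (q : RatFunc ℚ) ^ (b1 - b0) * q ^ (a1 - b1) = q ^ (a1 - b0) := by
    rw [zpow_mul_zpow]; congr 1; ring
  have hq : (q : RatFunc ℚ) ^ (b1 - b0) * q ^ (a2 - b1) = q ^ (a2 - b0) := by
    rw [zpow_mul_zpow]; congr 1; ring
  have hr : (q : RatFunc ℚ) ^ (a1 - b0) * q ^ (a2 - b1) = q ^ (a1 + a2 - b0 - b1) := by
    rw [zpow_mul_zpow]; congr 1; ring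
  linear_combination (q ^ (a2 - b1) - 1) * hp - hq + hr

/-- The scalar Toda identity. -/
lemma scal (n : ℕ) (A B : ℕ → ℕ) (hA0 : A 0 = 0) (hAn : A (n + 2) = 0)
    (hB0 : B 0 = 0) (hBn : B (n + 1) = 0)
    (hk : ∀ k, B k ≤ A k) (hk' : ∀ k, B k ≤ A (k + 1)) :
    ∑ i ∈ range (n + 2), ((q : RatFunc ℚ) ^ ((A (i + 1) : ℤ) - (A i : ℤ)) - 1)
      = ∑ i ∈ range (n + 1), ((q : RatFunc ℚ) ^ ((B (i + 1) : ℤ) - (B i : ℤ)) - 1)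
      + ∑ i ∈ range (n + 1), ((q : RatFunc ℚ) ^ ((A (i + 2) : ℤ) - (A (i + 1) : ℤ))
          * (1 - q ^ (A (i + 1) - B i)) * (1 - q ^ (A (i + 1) - B (i + 1))))
      - ∑ j ∈ range n, ((q : RatFunc ℚ) ^ ((B (j + 1) : ℤ) - (B j : ℤ))
          * (1 - q ^ (A (j + 1) - B (j + 1))) * (1 - q ^ (A (j + 2) - B (j + 1)))) := by
  have G := gen_identity (fun i => (q : RatFunc ℚ) ^ ((A i : ℤ)))
    (fun i => (q : RatFunc ℚ) ^ (-(A i : ℤ))) (fun i => (q : RatFunc ℚ) ^ ((B i : ℤ)))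
    (fun i => (q : RatFunc ℚ) ^ (-(B i : ℤ))) n
  have eL : ∑ i ∈ range (n + 2), ((q : RatFunc ℚ) ^ ((A (i + 1) : ℤ) - (A i : ℤ)) - 1)
      = ∑ i ∈ range (n + 2), ((q : RatFunc ℚ) ^ ((A (i + 1) : ℤ)) * q ^ (-(A i : ℤ)) - 1) := by
    refine sum_congr rfl fun i _ => ?_
    rw [zpow_mul_zpow]
    simp only [sub_eq_add_neg]
  have eM : ∑ i ∈ range (n + 1), ((q : RatFunc ℚ) ^ ((B (i + 1) : ℤ) - (B i : ℤ)) - 1)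
      = ∑ i ∈ range (n + 1), ((q : RatFunc ℚ) ^ ((B (i + 1) : ℤ)) * q ^ (-(B i : ℤ)) - 1) := by
    refine sum_congr rfl fun i _ => ?_
    rw [zpow_mul_zpow]
    simp only [sub_eq_add_neg]
  have eSA : ∑ i ∈ range (n + 1), ((q : RatFunc ℚ) ^ ((A (i + 2) : ℤ) - (A (i + 1) : ℤ))
          * (1 - q ^ (A (i + 1) - B i)) * (1 - q ^ (A (i + 1) - B (i + 1))))
      = ∑ i ∈ range (n + 1), ((q : RatFunc ℚ) ^ ((A (i + 2) : ℤ)) * q ^ (-(A (i + 1) : ℤ))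
          - q ^ ((A (i + 2) : ℤ)) * q ^ (-(B i : ℤ)) - q ^ ((A (i + 2) : ℤ)) * q ^ (-(B (i + 1) : ℤ))
          + q ^ ((A (i + 1) : ℤ)) * q ^ ((A (i + 2) : ℤ)) * (q ^ (-(B i : ℤ)) * q ^ (-(B (i + 1) : ℤ)))) := by
    refine sum_congr rfl fun i _ => ?_
    rw [npow_eq_zpow_sub (hk' i), npow_eq_zpow_sub (hk (i + 1)), term_i]
    simp only [zpow_mul_zpow, sub_eq_add_neg, add_assoc]
  have eSB : ∑ j ∈ range n, ((q : RatFunc ℚ) ^ ((B (j + 1) : ℤ) - (B j : ℤ))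
          * (1 - q ^ (A (j + 1) - B (j + 1))) * (1 - q ^ (A (j + 2) - B (j + 1))))
      = ∑ j ∈ range n, ((q : RatFunc ℚ) ^ ((B (j + 1) : ℤ)) * q ^ (-(B j : ℤ))
          - q ^ ((A (j + 1) : ℤ)) * q ^ (-(B j : ℤ)) - q ^ ((A (j + 2) : ℤ)) * q ^ (-(B j : ℤ))
          + q ^ ((A (j + 1) : ℤ)) * q ^ ((A (j + 2) : ℤ)) * (q ^ (-(B j : ℤ)) * q ^ (-(B (j + 1) : ℤ)))) := by
    refine sum_congr rfl fun j _ => ?_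
    rw [npow_eq_zpow_sub (hk (j + 1)), npow_eq_zpow_sub (hk' (j + 1)), term_j]
    simp only [zpow_mul_zpow, sub_eq_add_neg, add_assoc]
  rw [eL, eM, eSA, eSB]
  have b1 : (q : RatFunc ℚ) ^ (-(A 0 : ℤ)) = 1 := by rw [hA0]; norm_num
  have b2 : (q : RatFunc ℚ) ^ ((A (n + 2) : ℤ)) = 1 := by rw [hAn]; norm_num
  have b3 : (q : RatFunc ℚ) ^ (-(B 0 : ℤ)) = 1 := by rw [hB0]; norm_num
  have b4 : (q : RatFunc ℚ) ^ ((B (n + 1) : ℤ)) = 1 := by rw [hBn]; norm_num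
  have b4' : (q : RatFunc ℚ) ^ (-(B (n + 1) : ℤ)) = 1 := by rw [hBn]; norm_num
  rw [b1, b2, b3, b4, b4'] at G
  linear_combination G

/-! ### Lemmas on `ext` and `pairA` -/

lemma ext_zero (n : ℕ) (a : Fin n → ℕ) : ext n a 0 = 0 := dif_neg (by omega)

lemma ext_of_gt (n : ℕ) (a : Fin n → ℕ) {k : ℕ} (h : n < k) : ext n a k = 0 :=
  dif_neg (by omega)

lemma ext_fin (n : ℕ) (a : Fin n → ℕ) (i : Fin n) : ext n a (↑i + 1) = a i := by
  rw [_root_.ext, dif_pos ⟨by omega, by omega⟩]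
  exact congrArg a (Fin.ext (by simp))

lemma ext_sub_single (n : ℕ) (a : Fin (n + 1) → ℕ) (i : Fin (n + 1)) (k : ℕ) :
    ext (n + 1) (fun j => a j - if j = i then 1 else 0) k
      = ext (n + 1) a k - (if k = ↑i + 1 then 1 else 0) := by
  unfold _root_.ext
  by_cases h : 1 ≤ k ∧ k ≤ n + 1
  · rw [dif_pos h, dif_pos h]
    beta_reduce
    by_cases hI : k = ↑i + 1
    · have hv : (⟨k - 1, by omega⟩ : Fin (n + 1)) = i := Fin.ext (by simp; omega)
      rw [if_pos hv, if_pos hI]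
    · have hv : (⟨k - 1, by omega⟩ : Fin (n + 1)) ≠ i := by
        intro hc
        exact hI (by have := congrArg Fin.val hc; simp at this; omega)
      rw [if_neg hv, if_neg hI]
  · rw [dif_neg h, dif_neg h]
    have : k ≠ ↑i + 1 := by
      intro hc
      exact h (by constructor <;> omega)
    rw [if_neg this]

lemma ext_add_single (n : ℕ) (b : Fin n → ℕ) (j : Fin n) (k : ℕ) :
    ext n (fun l => b l + if l = j then 1 else 0) k
      = ext n b k + (if k = ↑j + 1 then 1 else 0) := by
  unfold _root_.ext
  by_cases h : 1 ≤ k ∧ k ≤ n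
  · rw [dif_pos h, dif_pos h]
    beta_reduce
    by_cases hI : k = ↑j + 1
    · have hv : (⟨k - 1, by omega⟩ : Fin n) = j := Fin.ext (by simp; omega)
      rw [if_pos hv, if_pos hI]
    · have hv : (⟨k - 1, by omega⟩ : Fin n) ≠ j := by
        intro hc
        exact hI (by have := congrArg Fin.val hc; simp at this; omega)
      rw [if_neg hv, if_neg hI]
  · rw [dif_neg h, dif_neg h]
    have : k ≠ ↑j + 1 := by
      intro hc
      exact h (by constructor <;> omega)
    rw [if_neg this]

lemma pair_le (n : ℕ) (b : Fin n → ℕ) :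
    ∑ k ∈ range n, ext n b (k + 1) * ext n b (k + 2)
      ≤ ∑ k ∈ range n, ext n b (k + 1) ^ 2 := by
  have h1 : ∑ k ∈ range n, 2 * (ext n b (k + 1) * ext n b (k + 2))
      ≤ ∑ k ∈ range n, (ext n b (k + 1) ^ 2 + ext n b (k + 2) ^ 2) := by
    refine sum_le_sum fun k _ => ?_
    have := two_mul_le_add_sq (ext n b (k + 1)) (ext n b (k + 2))
    nlinarith
  have h2 := Finset.sum_range_succ (fun k => ext n b (k + 1) ^ 2) n
  have h3 := Finset.sum_range_succ' (fun k => ext n b (k + 1) ^ 2) n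
  have h4 : ext n b (n + 1) = 0 := ext_of_gt n b (by omega)
  have h5 : ∑ k ∈ range n, (ext n b (k + 1) ^ 2 + ext n b (k + 2) ^ 2)
      = ∑ k ∈ range n, ext n b (k + 1) ^ 2 + ∑ k ∈ range n, ext n b (k + 2) ^ 2 :=
    sum_add_distrib
  have h6 : ∑ k ∈ range n, 2 * (ext n b (k + 1) * ext n b (k + 2))
      = 2 * ∑ k ∈ range n, ext n b (k + 1) * ext n b (k + 2) := by
    rw [mul_sum]
  have h3' : ∑ k ∈ range n, ext n b (k + 1 + 1) ^ 2
      = ∑ k ∈ range n, ext n b (k + 2) ^ 2 := rfl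
  rw [h4] at h2
  omega

lemma pair_update (n : ℕ) (b : Fin n → ℕ) (j : Fin n) :
    (pairA n (fun l => b l + if l = j then 1 else 0) : ℤ)
      = (pairA n b : ℤ) + 2 * (ext n b (↑j + 1) : ℤ) + 1 - (ext n b ↑j : ℤ)
        - (ext n b (↑j + 2) : ℤ) := by
  set b' : Fin n → ℕ := fun l => b l + if l = j then 1 else 0 with hb'
  have hS1 : ∑ k ∈ range n, ext n b' (k + 1) ^ 2
      = ∑ k ∈ range n, ext n b (k + 1) ^ 2 + (2 * ext n b (↑j + 1) + 1) := by
    have e : ∀ k ∈ range n, ext n b' (k + 1) ^ 2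
        = ext n b (k + 1) ^ 2 + (if k = ↑j then 2 * ext n b (k + 1) + 1 else 0) := by
      intro k _
      rw [hb', ext_add_single]
      by_cases h : k = ↑j
      · rw [if_pos (by omega), if_pos h]; ring
      · rw [if_neg (by omega), if_neg h]; ring
    rw [sum_congr rfl e, sum_add_distrib, sum_ite_eq' (range n) (↑j : ℕ)
      (fun k => 2 * ext n b (k + 1) + 1), if_pos (mem_range.2 j.isLt)]
  have hS2 : ∑ k ∈ range n, ext n b' (k + 1) * ext n b' (k + 2)
      = ∑ k ∈ range n, ext n b (k + 1) * ext n b (k + 2)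
        + (ext n b ↑j + ext n b (↑j + 2)) := by
    have e : ∀ k ∈ range n, ext n b' (k + 1) * ext n b' (k + 2)
        = ext n b (k + 1) * ext n b (k + 2)
          + ((if k + 1 = ↑j then ext n b (k + 1) else 0)
            + (if k = ↑j then ext n b (k + 2) else 0)) := by
      intro k _
      rw [hb', ext_add_single, ext_add_single]
      by_cases h1 : k = ↑j <;> by_cases h2 : k + 1 = ↑j
      · omega
      · rw [if_pos (by omega), if_neg (by omega), if_pos h1, if_neg h2]; ring
      · rw [if_neg (by omega), if_pos (by omega), if_neg h1, if_pos h2]; ring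
      · rw [if_neg (by omega), if_neg (by omega), if_neg h1, if_neg h2]; ring
    rw [sum_congr rfl e, sum_add_distrib, sum_add_distrib]
    have hA : ∑ k ∈ range n, (if k + 1 = ↑j then ext n b (k + 1) else 0) = ext n b ↑j := by
      rcases Nat.eq_zero_or_pos (↑j : ℕ) with hj | hj
      · rw [hj]
        rw [ext_zero]
        refine (sum_eq_zero fun k _ => if_neg (by omega))
      · have e2 : ∀ k ∈ range n, (if k + 1 = ↑j then ext n b (k + 1) else 0)
            = (if k = ↑j - 1 then ext n b (k + 1) else 0) := by
          intro k _
          by_cases h : k + 1 = ↑j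
          · rw [if_pos h, if_pos (by omega)]
          · rw [if_neg h, if_neg (by omega)]
        rw [sum_congr rfl e2, sum_ite_eq' (range n) (↑j - 1) (fun k => ext n b (k + 1)),
          if_pos (mem_range.2 (by omega))]
        congr 1
        omega
    have hB : ∑ k ∈ range n, (if k = ↑j then ext n b (k + 2) else 0) = ext n b (↑j + 2) := by
      rw [sum_ite_eq' (range n) (↑j : ℕ) (fun k => ext n b (k + 2)),
        if_pos (mem_range.2 j.isLt)]
    rw [hA, hB]
  have hle := pair_le n b
  have hle' := pair_le n b'
  unfold pairA
  omega

/-! ### The product `CC` and its single-slot modifications -/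

noncomputable def CC (n : ℕ) (A B : ℕ → ℕ) : RatFunc ℚ :=
  ∏ k ∈ range n, gb (A (k + 1)) (B (k + 1)) * gb (A (k + 2)) (B (k + 1))

lemma CC_eq_prod (n : ℕ) (a : Fin (n + 1) → ℕ) (b : Fin n → ℕ) :
    (∏ j : Fin n, gb (a j.castSucc) (b j) * gb (a j.succ) (b j))
      = CC n (ext (n + 1) a) (ext n b) := by
  rw [CC, ← Fin.prod_univ_eq_prod_range
    (fun k => gb (ext (n + 1) a (k + 1)) (ext n b (k + 1))
      * gb (ext (n + 1) a (k + 2)) (ext n b (k + 1))) n]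
  refine Fintype.prod_congr _ _ fun i => ?_
  have e1 : ext (n + 1) a (↑i + 1) = a i.castSucc := by
    have := ext_fin (n + 1) a i.castSucc
    simpa using this
  have e2 : ext (n + 1) a (↑i + 2) = a i.succ := by
    have := ext_fin (n + 1) a i.succ
    simpa using this
  have e3 : ext n b (↑i + 1) = b i := ext_fin n b i
  rw [e1, e2, e3]

lemma CC_eq_zero {n : ℕ} {A B : ℕ → ℕ} (k : ℕ) (hk : k < n)
    (h : A (k + 1) < B (k + 1) ∨ A (k + 2) < B (k + 1)) : CC n A B = 0 := by
  refine Finset.prod_eq_zero (mem_range.2 hk) ?_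
  rcases h with h | h
  · rw [gb_of_lt h, zero_mul]
  · rw [gb_of_lt h, mul_zero]

lemma mul_prod_eq_mul_prod (n k0 : ℕ) (hk : k0 ∈ range n) (f g : ℕ → RatFunc ℚ)
    (c d : RatFunc ℚ) (hfg : ∀ k ∈ range n, k ≠ k0 → f k = g k)
    (h : c * f k0 = d * g k0) :
    c * ∏ k ∈ range n, f k = d * ∏ k ∈ range n, g k := by
  rw [← Finset.prod_erase_mul _ f hk, ← Finset.prod_erase_mul _ g hk]
  have hP : ∏ k ∈ (range n).erase k0, f k = ∏ k ∈ (range n).erase k0, g k :=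
    prod_congr rfl fun k hk' => hfg k (mem_of_mem_erase hk') (ne_of_mem_erase hk')
  rw [hP]
  linear_combination (∏ k ∈ (range n).erase k0, g k) * h

lemma step_a (n : ℕ) (A B : ℕ → ℕ) (i : ℕ) (h1 : 1 ≤ i) (h2 : i ≤ n + 1)
    (hB0 : B 0 = 0) (hBn : B (n + 1) = 0)
    (hki : B i ≤ A i) (hki' : B (i - 1) ≤ A i) :
    (1 - q ^ A i) ^ 2 * CC n (fun k => A k - if k = i then 1 else 0) B
      = (1 - q ^ (A i - B (i - 1))) * (1 - q ^ (A i - B i)) * CC n A B := by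
  set A' : ℕ → ℕ := fun k => A k - if k = i then 1 else 0 with hA'
  have pa1 : (1 - q ^ A i) * ∏ k ∈ range n, gb (A' (k + 1)) (B (k + 1))
      = (1 - q ^ (A i - B i)) * ∏ k ∈ range n, gb (A (k + 1)) (B (k + 1)) := by
    rcases Nat.lt_or_ge (i - 1) n with hin | hin
    · refine mul_prod_eq_mul_prod n (i - 1) (mem_range.2 hin) _ _ _ _ ?_ ?_
      · intro k _ hne
        rw [hA']
        beta_reduce
        rw [if_neg (by omega), Nat.sub_zero]
      · have e : i - 1 + 1 = i := by omega
        rw [e, hA']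
        beta_reduce
        rw [if_pos rfl]
        exact RL1 (A i) (B i) hki
    · have hieq : i = n + 1 := by omega
      have hBi : B i = 0 := by rw [hieq]; exact hBn
      have hprod : ∏ k ∈ range n, gb (A' (k + 1)) (B (k + 1))
          = ∏ k ∈ range n, gb (A (k + 1)) (B (k + 1)) := by
        refine prod_congr rfl fun k hk => ?_
        have hkn := mem_range.1 hk
        rw [hA']
        beta_reduce
        rw [if_neg (by omega), Nat.sub_zero]
      rw [hprod, hBi, Nat.sub_zero]
  have pa2 : (1 - q ^ A i) * ∏ k ∈ range n, gb (A' (k + 2)) (B (k + 1))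
      = (1 - q ^ (A i - B (i - 1))) * ∏ k ∈ range n, gb (A (k + 2)) (B (k + 1)) := by
    rcases Nat.lt_or_ge i 2 with hi2 | hi2
    · have hieq : i = 1 := by omega
      have hBi : B (i - 1) = 0 := by rw [hieq]; exact hB0
      have hprod : ∏ k ∈ range n, gb (A' (k + 2)) (B (k + 1))
          = ∏ k ∈ range n, gb (A (k + 2)) (B (k + 1)) := by
        refine prod_congr rfl fun k hk => ?_
        rw [hA']
        beta_reduce
        rw [if_neg (by omega), Nat.sub_zero]
      rw [hprod, hBi, Nat.sub_zero]
    · refine mul_prod_eq_mul_prod n (i - 2) (mem_range.2 (by omega)) _ _ _ _ ?_ ?_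
      · intro k _ hne
        rw [hA']
        beta_reduce
        rw [if_neg (by omega), Nat.sub_zero]
      · have e : i - 2 + 2 = i := by omega
        have e' : i - 2 + 1 = i - 1 := by omega
        rw [e, e', hA']
        beta_reduce
        rw [if_pos rfl]
        exact RL1 (A i) (B (i - 1)) hki'
  have hsplit : ∀ C : ℕ → ℕ, CC n C B
      = (∏ k ∈ range n, gb (C (k + 1)) (B (k + 1)))
        * ∏ k ∈ range n, gb (C (k + 2)) (B (k + 1)) := by
    intro C
    rw [CC, prod_mul_distrib]
  rw [hsplit A', hsplit A]
  linear_combination ((1 - q ^ A i) * ∏ k ∈ range n, gb (A' (k + 2)) (B (k + 1))) * pa1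
    + ((1 - q ^ (A i - B i)) * ∏ k ∈ range n, gb (A (k + 1)) (B (k + 1))) * pa2

lemma step_b (n : ℕ) (A B : ℕ → ℕ) (j : ℕ) (h1 : 1 ≤ j) (h2 : j ≤ n)
    (hj : B j ≤ A j) (hj' : B j ≤ A (j + 1)) :
    (1 - q ^ (B j + 1)) ^ 2 * CC n A (fun k => B k + if k = j then 1 else 0)
      = (1 - q ^ (A j - B j)) * (1 - q ^ (A (j + 1) - B j)) * CC n A B := by
  set B' : ℕ → ℕ := fun k => B k + if k = j then 1 else 0 with hB'
  rw [CC, CC]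
  refine mul_prod_eq_mul_prod n (j - 1) (mem_range.2 (by omega)) _ _ _ _ ?_ ?_
  · intro k _ hne
    rw [hB']
    beta_reduce
    rw [if_neg (by omega)]
    norm_num
  · have e : j - 1 + 1 = j := by omega
    have e' : j - 1 + 2 = j + 1 := by omega
    rw [e, e', hB']
    beta_reduce
    rw [if_pos rfl]
    have r1 := RL2 (A j) (B j) hj
    have r2 := RL2 (A (j + 1)) (B j) hj'
    linear_combination ((1 - q ^ (B j + 1)) * gb (A (j + 1)) (B j + 1)) * r1
      + ((1 - q ^ (A j - B j)) * gb (A j) (B j)) * r2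


/-- The pointwise coefficient identity (Toda recursion coefficients). -/
lemma key (n : ℕ) (a : Fin (n + 1) → ℕ) (b : Fin n → ℕ) :
    (∑ i ∈ range (n + 2),
        ((q : RatFunc ℚ) ^ ((ext (n + 1) a (i + 1) : ℤ) - (ext (n + 1) a i : ℤ)) - 1))
        * ((∏ j : Fin n, gb (a j.castSucc) (b j) * gb (a j.succ) (b j)) * q ^ pairA n b)
      = (∑ i : Fin (n + 1),
            q ^ ((ext (n + 1) a ((i : ℕ) + 2) : ℤ) - (a i : ℤ)) * (1 - q ^ (a i : ℕ)) ^ 2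
            * ((∏ j : Fin n, gb (a j.castSucc - if j.castSucc = i then 1 else 0) (b j)
                * gb (a j.succ - if j.succ = i then 1 else 0) (b j)) * q ^ pairA n b))
        + (∑ i ∈ range (n + 1),
            ((q : RatFunc ℚ) ^ ((ext n b (i + 1) : ℤ) - (ext n b i : ℤ)) - 1))
            * ((∏ j : Fin n, gb (a j.castSucc) (b j) * gb (a j.succ) (b j)) * q ^ pairA n b)
        - ∑ j : Fin n,
            ((∏ l : Fin n, gb (a l.castSucc) (b l + if l = j then 1 else 0)
                * gb (a l.succ) (b l + if l = j then 1 else 0))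
              * q ^ pairA n (fun m => b m + if m = j then 1 else 0))
            * (q ^ ((ext n b ((j : ℕ) + 2) : ℤ) - ((b j : ℤ) + 1)) * (1 - q ^ (b j + 1)) ^ 2) := by
  have hA0 : ext (n + 1) a 0 = 0 := ext_zero _ a
  have hAn2 : ext (n + 1) a (n + 2) = 0 := ext_of_gt _ a (by omega)
  have hB0 : ext n b 0 = 0 := ext_zero n b
  have hBn1 : ext n b (n + 1) = 0 := ext_of_gt n b (by omega)
  have hai : ∀ i : Fin (n + 1), a i = ext (n + 1) a (↑i + 1) := fun i => (ext_fin _ a i).symm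
  have hbj : ∀ j : Fin n, b j = ext n b (↑j + 1) := fun j => (ext_fin n b j).symm
  have hacs : ∀ j : Fin n, a j.castSucc = ext (n + 1) a (↑j + 1) := by
    intro j
    have := ext_fin (n + 1) a j.castSucc
    simp at this
    exact this.symm
  have hasu : ∀ j : Fin n, a j.succ = ext (n + 1) a (↑j + 2) := by
    intro j
    have := ext_fin (n + 1) a j.succ
    simp at this
    exact this.symm
  have hT : (∏ j : Fin n, gb (a j.castSucc) (b j) * gb (a j.succ) (b j))
      = CC n (ext (n + 1) a) (ext n b) := CC_eq_prod n a b
  have hTi : ∀ i : Fin (n + 1),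
      (∏ j : Fin n, gb (a j.castSucc - if j.castSucc = i then 1 else 0) (b j)
          * gb (a j.succ - if j.succ = i then 1 else 0) (b j))
        = CC n (fun k => ext (n + 1) a k - if k = ↑i + 1 then 1 else 0) (ext n b) := by
    intro i
    have h := CC_eq_prod n (fun l => a l - if l = i then 1 else 0) b
    have h2 : ext (n + 1) (fun l => a l - if l = i then 1 else 0)
        = fun k => ext (n + 1) a k - if k = ↑i + 1 then 1 else 0 :=
      funext (ext_sub_single n a i)
    rw [h2] at h
    exact h
  have hTj : ∀ j : Fin n,
      (∏ l : Fin n, gb (a l.castSucc) (b l + if l = j then 1 else 0)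
          * gb (a l.succ) (b l + if l = j then 1 else 0))
        = CC n (ext (n + 1) a) (fun k => ext n b k + if k = ↑j + 1 then 1 else 0) := by
    intro j
    have h := CC_eq_prod n a (fun m => b m + if m = j then 1 else 0)
    have h2 : ext n (fun m => b m + if m = j then 1 else 0)
        = fun k => ext n b k + if k = ↑j + 1 then 1 else 0 :=
      funext (ext_add_single n b j)
    rw [h2] at h
    exact h
  by_cases hsupp : ∀ j : Fin n, b j ≤ a j.castSucc ∧ b j ≤ a j.succ
  · -- the support case
    have hk : ∀ k, ext n b k ≤ ext (n + 1) a k := by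
      intro k
      by_cases h : 1 ≤ k ∧ k ≤ n
      · obtain ⟨h1, h2⟩ := h
        set j : Fin n := ⟨k - 1, by omega⟩ with hj
        have e : k = ↑j + 1 := by simp [hj]; omega
        rw [e, ← hbj j, ← hacs j]
        exact (hsupp j).1
      · have : ext n b k = 0 := by
          rcases Nat.lt_or_ge k 1 with h' | h'
          · interval_cases k
            exact hB0
          · exact ext_of_gt n b (by omega)
        rw [this]
        exact Nat.zero_le _
    have hk' : ∀ k, ext n b k ≤ ext (n + 1) a (k + 1) := by
      intro k
      by_cases h : 1 ≤ k ∧ k ≤ n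
      · obtain ⟨h1, h2⟩ := h
        set j : Fin n := ⟨k - 1, by omega⟩ with hj
        have e : k = ↑j + 1 := by simp [hj]; omega
        rw [e, ← hbj j]
        have h3 := (hsupp j).2
        rw [hbj j, hasu j] at h3
        rw [← hbj j] at h3
        exact h3
      · have : ext n b k = 0 := by
          rcases Nat.lt_or_ge k 1 with h' | h'
          · interval_cases k
            exact hB0
          · exact ext_of_gt n b (by omega)
        rw [this]
        exact Nat.zero_le _
    have hscal := scal n (ext (n + 1) a) (ext n b) hA0 hAn2 hB0 hBn1 hk hk'
    have hIsum : (∑ i : Fin (n + 1),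
          q ^ ((ext (n + 1) a ((i : ℕ) + 2) : ℤ) - (a i : ℤ)) * (1 - q ^ (a i : ℕ)) ^ 2
            * ((∏ j : Fin n, gb (a j.castSucc - if j.castSucc = i then 1 else 0) (b j)
                * gb (a j.succ - if j.succ = i then 1 else 0) (b j)) * q ^ pairA n b))
        = (∑ i ∈ range (n + 1), ((q : RatFunc ℚ) ^ ((ext (n + 1) a (i + 2) : ℤ) - (ext (n + 1) a (i + 1) : ℤ))
            * (1 - q ^ (ext (n + 1) a (i + 1) - ext n b i))
            * (1 - q ^ (ext (n + 1) a (i + 1) - ext n b (i + 1)))))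
          * (CC n (ext (n + 1) a) (ext n b) * q ^ pairA n b) := by
      rw [sum_mul, ← Fin.sum_univ_eq_sum_range (fun i =>
        ((q : RatFunc ℚ) ^ ((ext (n + 1) a (i + 2) : ℤ) - (ext (n + 1) a (i + 1) : ℤ))
            * (1 - q ^ (ext (n + 1) a (i + 1) - ext n b i))
            * (1 - q ^ (ext (n + 1) a (i + 1) - ext n b (i + 1))))
          * (CC n (ext (n + 1) a) (ext n b) * q ^ pairA n b)) (n + 1)]
      refine Fintype.sum_congr _ _ fun i => ?_
      rw [hai i, hTi i]
      have hstep := step_a n (ext (n + 1) a) (ext n b) (↑i + 1) (by omega) (by omega)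
        hB0 hBn1 (hk (↑i + 1)) (by simpa using hk' ↑i)
      simp only [Nat.add_sub_cancel] at hstep
      linear_combination (q ^ ((ext (n + 1) a (↑i + 2) : ℤ) - (ext (n + 1) a (↑i + 1) : ℤ))
        * q ^ pairA n b) * hstep
    have hJsum : (∑ j : Fin n,
          ((∏ l : Fin n, gb (a l.castSucc) (b l + if l = j then 1 else 0)
              * gb (a l.succ) (b l + if l = j then 1 else 0))
            * q ^ pairA n (fun m => b m + if m = j then 1 else 0))
          * (q ^ ((ext n b ((j : ℕ) + 2) : ℤ) - ((b j : ℤ) + 1)) * (1 - q ^ (b j + 1)) ^ 2))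
        = (∑ j ∈ range n, ((q : RatFunc ℚ) ^ ((ext n b (j + 1) : ℤ) - (ext n b j : ℤ))
            * (1 - q ^ (ext (n + 1) a (j + 1) - ext n b (j + 1)))
            * (1 - q ^ (ext (n + 1) a (j + 2) - ext n b (j + 1)))))
          * (CC n (ext (n + 1) a) (ext n b) * q ^ pairA n b) := by
      rw [sum_mul, ← Fin.sum_univ_eq_sum_range (fun j =>
        ((q : RatFunc ℚ) ^ ((ext n b (j + 1) : ℤ) - (ext n b j : ℤ))
            * (1 - q ^ (ext (n + 1) a (j + 1) - ext n b (j + 1)))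
            * (1 - q ^ (ext (n + 1) a (j + 2) - ext n b (j + 1))))
          * (CC n (ext (n + 1) a) (ext n b) * q ^ pairA n b)) n]
      refine Fintype.sum_congr _ _ fun j => ?_
      rw [hbj j, hTj j]
      have hstep := step_b n (ext (n + 1) a) (ext n b) (↑j + 1) (by omega)
        (by have := j.isLt; omega) (hk (↑j + 1)) (hk' (↑j + 1))
      simp only [show ∀ m : ℕ, m + 1 + 1 = m + 2 from fun _ => rfl] at hstep
      have hz : (q : RatFunc ℚ) ^ pairA n (fun m => b m + if m = j then 1 else 0)
            * q ^ ((ext n b (↑j + 2) : ℤ) - ((ext n b (↑j + 1) : ℤ) + 1))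
          = q ^ pairA n b * q ^ ((ext n b (↑j + 1) : ℤ) - (ext n b ↑j : ℤ)) := by
        rw [← zpow_natCast q (pairA n (fun m => b m + if m = j then 1 else 0)),
          ← zpow_natCast q (pairA n b), zpow_mul_zpow, zpow_mul_zpow]
        congr 1
        have := pair_update n b j
        omega
      linear_combination ((q : RatFunc ℚ) ^ pairA n (fun m => b m + if m = j then 1 else 0)
          * q ^ ((ext n b (↑j + 2) : ℤ) - ((ext n b (↑j + 1) : ℤ) + 1)))
          * hstep
        + ((1 - q ^ (ext (n + 1) a (↑j + 1) - ext n b (↑j + 1)))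
          * (1 - q ^ (ext (n + 1) a (↑j + 2) - ext n b (↑j + 1)))
          * CC n (ext (n + 1) a) (ext n b)) * hz
    rw [hT, hIsum, hJsum]
    linear_combination (CC n (ext (n + 1) a) (ext n b) * q ^ pairA n b) * hscal
  · -- outside the support: everything vanishes
    push_neg at hsupp
    obtain ⟨j0, hj0⟩ := hsupp
    have hviol : ext (n + 1) a (↑j0 + 1) < ext n b (↑j0 + 1)
        ∨ ext (n + 1) a (↑j0 + 2) < ext n b (↑j0 + 1) := by
      rw [← hacs j0, ← hasu j0, ← hbj j0]
      by_cases h : b j0 ≤ a j0.castSucc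
      · right
        have := hj0 h
        omega
      · left
        omega
    have hCC : CC n (ext (n + 1) a) (ext n b) = 0 := CC_eq_zero ↑j0 j0.isLt hviol
    have hCCi : ∀ i : Fin (n + 1),
        CC n (fun k => ext (n + 1) a k - if k = ↑i + 1 then 1 else 0) (ext n b) = 0 := by
      intro i
      refine CC_eq_zero ↑j0 j0.isLt ?_
      beta_reduce
      rcases hviol with h | h
      · left; split_ifs <;> omega
      · right; split_ifs <;> omega
    have hCCj : ∀ j : Fin n,
        CC n (ext (n + 1) a) (fun k => ext n b k + if k = ↑j + 1 then 1 else 0) = 0 := by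
      intro j
      refine CC_eq_zero ↑j0 j0.isLt ?_
      beta_reduce
      rcases hviol with h | h
      · left; split_ifs <;> omega
      · right; split_ifs <;> omega
    simp only [hT, hTi, hTj, hCC, hCCi, hCCj, zero_mul, mul_zero, sum_const_zero,
      add_zero, zero_add, sub_zero, zero_sub, neg_zero]

/-- the polynomials `H_α`, defined by `H = 1` in rank `0` and the
rank-lowering recursion
`H_α = ∑_β ∏ⱼ [aⱼ,bⱼ]_q [aⱼ₊₁,bⱼ]_q q^{(β,β)/2} H_β`, satisfy the Toda
recursion `(∑_{i=0}^n (q^{aᵢ₊₁-aᵢ} - 1)) H_α = ∑_{i=1}^n q^{aᵢ₊₁-aᵢ}(1-q^{aᵢ})² H_{α-αᵢ}`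
(with `a₀ = aₙ₊₁ = 0`; when `aᵢ = 0` the corresponding term vanishes thanks to
the factor `(1-q^{aᵢ})² = 0`). -/
theorem stmt_12 (H : (n : ℕ) → (Fin n → ℕ) → RatFunc ℚ)
    (h0 : ∀ a : Fin 0 → ℕ, H 0 a = 1)
    (hrec : ∀ (n : ℕ) (a : Fin (n + 1) → ℕ),
      H (n + 1) a = ∑ᶠ b : Fin n → ℕ,
        (∏ j : Fin n, gb (a j.castSucc) (b j) * gb (a j.succ) (b j)) *
          q ^ pairA n b * H n b) :
    ∀ (n : ℕ) (a : Fin n → ℕ),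
      (∑ i ∈ Finset.range (n + 1),
          (q ^ ((ext n a (i + 1) : ℤ) - (ext n a i : ℤ)) - 1)) * H n a =
        ∑ i : Fin n,
          q ^ ((ext n a ((i : ℕ) + 2) : ℤ) - (a i : ℤ)) * (1 - q ^ (a i : ℕ)) ^ 2 *
            H n (fun j => a j - if j = i then 1 else 0) := by
  intro n
  induction n with
  | zero =>
    intro a
    have e1 : ext 0 a 1 = 0 := ext_of_gt 0 a (by omega)
    have e0 : ext 0 a 0 = 0 := ext_zero 0 a
    simp [e1, e0]
  | succ n ih =>
    intro a
    classical
    simp only [show n + 1 + 1 = n + 2 from rfl]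
    set N := ∑ i, a i with hN
    have haN : ∀ i, a i ≤ N := fun i =>
      Finset.single_le_sum (f := a) (fun j _ => Nat.zero_le (a j)) (mem_univ i)
    set S : Finset (Fin n → ℕ) := Fintype.piFinset (fun _ => range (N + 1)) with hS
    set S' : Finset (Fin n → ℕ) := Fintype.piFinset (fun _ => range (N + 2)) with hS'
    have hSS' : S ⊆ S' := by
      intro c hc
      simp only [hS, hS', Fintype.mem_piFinset, mem_range] at hc ⊢
      intro m
      have := hc m
      omega
    have hvanish : ∀ (a' : Fin (n + 1) → ℕ), (∀ i, a' i ≤ N) → ∀ (b : Fin n → ℕ) (m : Fin n),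
        N < b m → (∏ j : Fin n, gb (a' j.castSucc) (b j) * gb (a' j.succ) (b j)) = 0 := by
      intro a' ha' b m hm
      refine prod_eq_zero (mem_univ m) ?_
      rw [gb_of_lt (lt_of_le_of_lt (ha' m.castSucc) hm), zero_mul]
    have hexp : ∀ (a' : Fin (n + 1) → ℕ), (∀ i, a' i ≤ N) →
        H (n + 1) a' = ∑ b ∈ S,
          (∏ j : Fin n, gb (a' j.castSucc) (b j) * gb (a' j.succ) (b j)) * q ^ pairA n b
            * H n b := by
      intro a' ha'
      rw [hrec n a']
      refine finsum_eq_sum_of_support_subset _ ?_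
      intro b hb
      simp only [Function.mem_support] at hb
      rw [mem_coe]
      by_contra hbS
      apply hb
      simp only [hS, Fintype.mem_piFinset, mem_range] at hbS
      push_neg at hbS
      obtain ⟨m, hm⟩ := hbS
      rw [hvanish a' ha' b m (by omega), zero_mul, zero_mul]
    rw [hexp a haN]
    have hrwi : ∀ i : Fin (n + 1), H (n + 1) (fun j => a j - if j = i then 1 else 0)
        = ∑ b ∈ S, (∏ j : Fin n, gb (a j.castSucc - if j.castSucc = i then 1 else 0) (b j)
            * gb (a j.succ - if j.succ = i then 1 else 0) (b j)) * q ^ pairA n b * H n b := by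
      intro i
      have h := hexp (fun j => a j - if j = i then 1 else 0)
        (fun l => le_trans (Nat.sub_le _ _) (haN l))
      simpa using h
    simp only [hrwi]
    -- reindexing lemma
    have hreidx : ∀ j : Fin n,
        ∑ b ∈ S, ((∏ l : Fin n, gb (a l.castSucc) (b l) * gb (a l.succ) (b l)) * q ^ pairA n b)
            * (q ^ ((ext n b ((j : ℕ) + 2) : ℤ) - (b j : ℤ)) * (1 - q ^ (b j : ℕ)) ^ 2
              * H n (fun m => b m - if m = j then 1 else 0))
          = ∑ b ∈ S, ((∏ l : Fin n, gb (a l.castSucc) (b l + if l = j then 1 else 0)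
                * gb (a l.succ) (b l + if l = j then 1 else 0))
              * q ^ pairA n (fun m => b m + if m = j then 1 else 0))
            * (q ^ ((ext n b ((j : ℕ) + 2) : ℤ) - ((b j : ℤ) + 1)) * (1 - q ^ (b j + 1)) ^ 2
              * H n b) := by
      intro j
      set Φ : (Fin n → ℕ) → (Fin n → ℕ) :=
        fun b => fun m => b m + if m = j then 1 else 0 with hΦdef
      set F : (Fin n → ℕ) → RatFunc ℚ := fun c =>
        ((∏ l : Fin n, gb (a l.castSucc) (c l) * gb (a l.succ) (c l)) * q ^ pairA n c)
          * (q ^ ((ext n c ((j : ℕ) + 2) : ℤ) - (c j : ℤ)) * (1 - q ^ (c j : ℕ)) ^ 2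
            * H n (fun m => c m - if m = j then 1 else 0)) with hFdef
      have hΦ : ∀ b : Fin n → ℕ,
          ((∏ l : Fin n, gb (a l.castSucc) (b l + if l = j then 1 else 0)
              * gb (a l.succ) (b l + if l = j then 1 else 0))
            * q ^ pairA n (fun m => b m + if m = j then 1 else 0))
            * (q ^ ((ext n b ((j : ℕ) + 2) : ℤ) - ((b j : ℤ) + 1)) * (1 - q ^ (b j + 1)) ^ 2
              * H n b)
          = F (Φ b) := by
        intro b
        rw [hFdef, hΦdef]
        beta_reduce
        have e1 : b j + (if j = j then 1 else 0) = b j + 1 := by simp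
        have e2 : ext n (fun m => b m + if m = j then 1 else 0) ((j : ℕ) + 2)
            = ext n b ((j : ℕ) + 2) := by
          rw [ext_add_single, if_neg (by omega), Nat.add_zero]
        have e3 : (fun m => b m + (if m = j then 1 else 0) - if m = j then 1 else 0) = b :=
          funext fun m => by by_cases h : m = j <;> simp [h]
        rw [e1, e2, e3]
        norm_cast
      have h1 : ∑ b ∈ S,
          ((∏ l : Fin n, gb (a l.castSucc) (b l) * gb (a l.succ) (b l)) * q ^ pairA n b)
            * (q ^ ((ext n b ((j : ℕ) + 2) : ℤ) - (b j : ℤ)) * (1 - q ^ (b j : ℕ)) ^ 2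
              * H n (fun m => b m - if m = j then 1 else 0))
          = ∑ b ∈ S, F b := sum_congr rfl fun b _ => rfl
      have h2 : ∑ b ∈ S,
          ((∏ l : Fin n, gb (a l.castSucc) (b l + if l = j then 1 else 0)
              * gb (a l.succ) (b l + if l = j then 1 else 0))
            * q ^ pairA n (fun m => b m + if m = j then 1 else 0))
            * (q ^ ((ext n b ((j : ℕ) + 2) : ℤ) - ((b j : ℤ) + 1)) * (1 - q ^ (b j + 1)) ^ 2
              * H n b)
          = ∑ b ∈ S, F (Φ b) := sum_congr rfl fun b _ => hΦ b
      rw [h1, h2]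
      have hinj : ∀ x ∈ S, ∀ y ∈ S, Φ x = Φ y → x = y := by
        intro x _ y _ h
        funext m
        have := congrFun h m
        simp only [hΦdef] at this
        omega
      have himg : S.image Φ ⊆ S' := by
        intro c hc
        obtain ⟨b, hb, rfl⟩ := mem_image.1 hc
        simp only [hS, Fintype.mem_piFinset, mem_range] at hb
        simp only [hS', hΦdef, Fintype.mem_piFinset, mem_range]
        intro m
        have := hb m
        split_ifs <;> omega
      have hvan1 : ∀ c ∈ S', c ∉ S → F c = 0 := by
        intro c _ hcS
        simp only [hS, Fintype.mem_piFinset, mem_range] at hcS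
        push_neg at hcS
        obtain ⟨m, hm⟩ := hcS
        rw [hFdef]
        beta_reduce
        rw [hvanish a haN c m (by omega), zero_mul, zero_mul]
      have hvan2 : ∀ c ∈ S', c ∉ S.image Φ → F c = 0 := by
        intro c hc hcim
        by_cases hcj : c j = 0
        · rw [hFdef]
          beta_reduce
          rw [hcj]
          norm_num
        · by_cases hball : ∀ m, (c m - if m = j then 1 else 0) < N + 1
          · exfalso
            apply hcim
            refine mem_image.2 ⟨fun m => c m - if m = j then 1 else 0, ?_, ?_⟩
            · simp only [hS, Fintype.mem_piFinset, mem_range]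
              exact hball
            · rw [hΦdef]
              funext m
              beta_reduce
              by_cases h : m = j <;> simp [h] <;> omega
          · push_neg at hball
            obtain ⟨m, hm⟩ := hball
            have hcm : N < c m := by
              simp only [hS', Fintype.mem_piFinset, mem_range] at hc
              have hc' := hc m
              split_ifs at hm <;> omega
            rw [hFdef]
            beta_reduce
            rw [hvanish a haN c m hcm, zero_mul, zero_mul]
      calc ∑ b ∈ S, F b = ∑ b ∈ S', F b := Finset.sum_subset hSS' hvan1
        _ = ∑ c ∈ S.image Φ, F c := (Finset.sum_subset himg hvan2).symm
        _ = ∑ b ∈ S, F (Φ b) := Finset.sum_image hinj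
    -- assembling everything
    rw [mul_sum]
    simp only [mul_sum]
    rw [Finset.sum_comm]
    have step1 : ∑ b ∈ S,
        (∑ i ∈ range (n + 2),
          ((q : RatFunc ℚ) ^ ((ext (n + 1) a (i + 1) : ℤ) - (ext (n + 1) a i : ℤ)) - 1))
          * ((∏ j : Fin n, gb (a j.castSucc) (b j) * gb (a j.succ) (b j)) * q ^ pairA n b
            * H n b)
        = ∑ b ∈ S,
          ((∑ i : Fin (n + 1),
              q ^ ((ext (n + 1) a ((i : ℕ) + 2) : ℤ) - (a i : ℤ)) * (1 - q ^ (a i : ℕ)) ^ 2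
              * ((∏ j : Fin n, gb (a j.castSucc - if j.castSucc = i then 1 else 0) (b j)
                  * gb (a j.succ - if j.succ = i then 1 else 0) (b j)) * q ^ pairA n b))
              * H n b
            + (((∑ i ∈ range (n + 1),
                ((q : RatFunc ℚ) ^ ((ext n b (i + 1) : ℤ) - (ext n b i : ℤ)) - 1))
                * ((∏ j : Fin n, gb (a j.castSucc) (b j) * gb (a j.succ) (b j))
                  * q ^ pairA n b)) * H n b
              - (∑ j : Fin n,
                  ((∏ l : Fin n, gb (a l.castSucc) (b l + if l = j then 1 else 0)
                      * gb (a l.succ) (b l + if l = j then 1 else 0))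
                    * q ^ pairA n (fun m => b m + if m = j then 1 else 0))
                  * (q ^ ((ext n b ((j : ℕ) + 2) : ℤ) - ((b j : ℤ) + 1))
                    * (1 - q ^ (b j + 1)) ^ 2)) * H n b)) :=
      sum_congr rfl fun b _ => by linear_combination (H n b) * key n a b
    rw [step1, sum_add_distrib, sum_sub_distrib]
    have hmid : ∑ b ∈ S,
        ((∑ i ∈ range (n + 1),
          ((q : RatFunc ℚ) ^ ((ext n b (i + 1) : ℤ) - (ext n b i : ℤ)) - 1))
          * ((∏ j : Fin n, gb (a j.castSucc) (b j) * gb (a j.succ) (b j)) * q ^ pairA n b))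
          * H n b
        = ∑ b ∈ S,
          (∑ j : Fin n,
            ((∏ l : Fin n, gb (a l.castSucc) (b l + if l = j then 1 else 0)
                * gb (a l.succ) (b l + if l = j then 1 else 0))
              * q ^ pairA n (fun m => b m + if m = j then 1 else 0))
            * (q ^ ((ext n b ((j : ℕ) + 2) : ℤ) - ((b j : ℤ) + 1))
              * (1 - q ^ (b j + 1)) ^ 2)) * H n b := by
      calc ∑ b ∈ S,
          ((∑ i ∈ range (n + 1),
            ((q : RatFunc ℚ) ^ ((ext n b (i + 1) : ℤ) - (ext n b i : ℤ)) - 1))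
            * ((∏ j : Fin n, gb (a j.castSucc) (b j) * gb (a j.succ) (b j)) * q ^ pairA n b))
            * H n b
          = ∑ b ∈ S,
            ((∏ l : Fin n, gb (a l.castSucc) (b l) * gb (a l.succ) (b l)) * q ^ pairA n b)
              * (∑ j : Fin n,
                q ^ ((ext n b ((j : ℕ) + 2) : ℤ) - (b j : ℤ)) * (1 - q ^ (b j : ℕ)) ^ 2
                  * H n (fun m => b m - if m = j then 1 else 0)) :=
            sum_congr rfl fun b _ => by rw [← ih b]; ring
        _ = ∑ b ∈ S, ∑ j : Fin n,
            ((∏ l : Fin n, gb (a l.castSucc) (b l) * gb (a l.succ) (b l)) * q ^ pairA n b)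
              * (q ^ ((ext n b ((j : ℕ) + 2) : ℤ) - (b j : ℤ)) * (1 - q ^ (b j : ℕ)) ^ 2
                * H n (fun m => b m - if m = j then 1 else 0)) :=
            sum_congr rfl fun b _ => mul_sum _ _ _
        _ = ∑ j : Fin n, ∑ b ∈ S,
            ((∏ l : Fin n, gb (a l.castSucc) (b l) * gb (a l.succ) (b l)) * q ^ pairA n b)
              * (q ^ ((ext n b ((j : ℕ) + 2) : ℤ) - (b j : ℤ)) * (1 - q ^ (b j : ℕ)) ^ 2
                * H n (fun m => b m - if m = j then 1 else 0)) := Finset.sum_comm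
        _ = ∑ j : Fin n, ∑ b ∈ S,
            ((∏ l : Fin n, gb (a l.castSucc) (b l + if l = j then 1 else 0)
                * gb (a l.succ) (b l + if l = j then 1 else 0))
              * q ^ pairA n (fun m => b m + if m = j then 1 else 0))
            * (q ^ ((ext n b ((j : ℕ) + 2) : ℤ) - ((b j : ℤ) + 1)) * (1 - q ^ (b j + 1)) ^ 2
              * H n b) := Fintype.sum_congr _ _ fun j => hreidx j
        _ = ∑ b ∈ S, ∑ j : Fin n,
            ((∏ l : Fin n, gb (a l.castSucc) (b l + if l = j then 1 else 0)
                * gb (a l.succ) (b l + if l = j then 1 else 0))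
              * q ^ pairA n (fun m => b m + if m = j then 1 else 0))
            * (q ^ ((ext n b ((j : ℕ) + 2) : ℤ) - ((b j : ℤ) + 1)) * (1 - q ^ (b j + 1)) ^ 2
              * H n b) := Finset.sum_comm
        _ = ∑ b ∈ S,
            (∑ j : Fin n,
              ((∏ l : Fin n, gb (a l.castSucc) (b l + if l = j then 1 else 0)
                  * gb (a l.succ) (b l + if l = j then 1 else 0))
                * q ^ pairA n (fun m => b m + if m = j then 1 else 0))
              * (q ^ ((ext n b ((j : ℕ) + 2) : ℤ) - ((b j : ℤ) + 1))
                * (1 - q ^ (b j + 1)) ^ 2)) * H n b := by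
            refine sum_congr rfl fun b _ => ?_
            rw [sum_mul]
            exact Fintype.sum_congr _ _ fun j => by ring
    rw [hmid, sub_self, add_zero]
    refine sum_congr rfl fun b _ => ?_
    rw [sum_mul]
    exact Fintype.sum_congr _ _ fun i => by ring
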